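/- Let a ∈ ℝ, let g : [a,∞) → ℂ be bounded and measurable, and let K be a measurable kernel on {(x,y) : a ≤ x ≤ y} with |K(x,y)| ≤ Q(y) for some Q ∈ L¹([a,∞)). Then the Volterra integral equation f(x) = g(x) + ∫_x^∞ K(x,y) f(y) dy has a unique bounded measurable solution f on [a,∞); the solution is obtained by successive iterations, and it satisfies |f(x)| ≤ ‖g‖_∞ exp( ∫_x^∞ Q(y) dy ) for all x ≥ a. -/

import Mathlib

/-!
Successive approximation. Write `A x = ∫_x^∞ Q` and `V v x = ∫_x^∞ K x y v y dy`. Fubini on the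
triangle `x < z ≤ y` gives `∫_x^∞ Q Aⁿ = A(x)ⁿ⁺¹ / (n + 1)`, so a bound `|v| ≤ C Aⁿ / n!` on
`[a, ∞)` improves to `|V v| ≤ C Aⁿ⁺¹ / (n + 1)!`. Hence the Picard iterates `Vⁿ g` are dominated
by `‖g‖_∞ Aⁿ / n!`, their sum solves the equation and is bounded by `‖g‖_∞ exp A`, and the
difference `d = V d` of two bounded solutions satisfies `|d| ≤ C Aⁿ / n! → 0`.
-/

open MeasureTheory Filter Topology Set

noncomputable section

section TailIntegral

variable {Q φ : ℝ → ℝ} {x : ℝ}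

def tailIntegral (Q : ℝ → ℝ) (x : ℝ) : ℝ := ∫ y in Ioi x, Q y

lemma tailIntegral_eq_integral_Ioc_add (hQ : IntegrableOn Q (Ioi x)) {y : ℝ} (hxy : x ≤ y) :
    tailIntegral Q x = (∫ z in Ioc x y, Q z) + tailIntegral Q y := by
  rw [tailIntegral, tailIntegral, ← Ioc_union_Ioi_eq_Ioi hxy,
    setIntegral_union Ioc_disjoint_Ioi_same measurableSet_Ioi
      (hQ.mono_set Ioc_subset_Ioi_self) (hQ.mono_set (Ioi_subset_Ioi hxy))]

lemma abs_tailIntegral_le (hQ : IntegrableOn Q (Ioi x)) {y : ℝ} (hxy : x ≤ y) :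
    |tailIntegral Q y| ≤ ∫ z in Ioi x, |Q z| :=
  (abs_integral_le_integral_abs).trans <|
    setIntegral_mono_set hQ.abs (Eventually.of_forall fun _ => abs_nonneg _)
      (Ioi_subset_Ioi hxy).eventuallyLE

lemma aestronglyMeasurable_tailIntegral (hQ : IntegrableOn Q (Ioi x)) :
    AEStronglyMeasurable (tailIntegral Q) (volume.restrict (Ioi x)) := by
  have hF : AEStronglyMeasurable (fun p : ℝ × ℝ => (Ioi p.1).indicator Q p.2)
      ((volume.restrict (Ioi x)).prod (volume.restrict (Ioi x))) := by
    have : (fun p : ℝ × ℝ => (Ioi p.1).indicator Q p.2) =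
        {p : ℝ × ℝ | p.1 < p.2}.indicator (fun p => Q p.2) := by
      ext p; simp [indicator_apply]
    rw [this]
    exact hQ.aestronglyMeasurable.comp_snd.indicator
      (measurableSet_lt measurable_fst measurable_snd)
  refine hF.integral_prod_right'.congr ?_
  filter_upwards [ae_restrict_mem measurableSet_Ioi] with y hy
  rw [setIntegral_indicator measurableSet_Ioi,
    inter_eq_right.mpr (Ioi_subset_Ioi (le_of_lt hy)), tailIntegral]

lemma integrableOn_mul_tailIntegral_pow (hQ : IntegrableOn Q (Ioi x)) (n : ℕ) :
    IntegrableOn (fun y => Q y * tailIntegral Q y ^ n) (Ioi x) := by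
  refine hQ.mul_bdd ((aestronglyMeasurable_tailIntegral hQ).pow n)
    (c := (∫ z in Ioi x, |Q z|) ^ n) ?_
  filter_upwards [ae_restrict_mem measurableSet_Ioi] with y hy
  rw [norm_pow, Real.norm_eq_abs]
  exact pow_le_pow_left₀ (abs_nonneg _) (abs_tailIntegral_le hQ (le_of_lt hy)) n

lemma integral_mul_integral_Ioc_eq (hφ : IntegrableOn φ (Ioi x)) (hQ : IntegrableOn Q (Ioi x)) :
    ∫ y in Ioi x, φ y * ∫ z in Ioc x y, Q z = ∫ z in Ioi x, Q z * ∫ y in Ioi z, φ y := by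
  set F : ℝ → ℝ → ℝ := fun y z => (Iic y).indicator (fun z => φ y * Q z) z
  have hF : Integrable (Function.uncurry F)
      ((volume.restrict (Ioi x)).prod (volume.restrict (Ioi x))) := by
    have : Function.uncurry F = {p : ℝ × ℝ | p.2 ≤ p.1}.indicator (fun p => φ p.1 * Q p.2) := by
      ext p; simp [F, indicator_apply, Function.uncurry]
    rw [this]
    exact (hφ.mul_prod hQ).indicator (measurableSet_le measurable_snd measurable_fst)
  have hleft : ∀ y ∈ Ioi x, ∫ z in Ioi x, F y z = φ y * ∫ z in Ioc x y, Q z := by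
    intro y _
    rw [setIntegral_indicator measurableSet_Iic, Ioi_inter_Iic, integral_const_mul]
  have hright : ∀ z ∈ Ioi x, ∫ y in Ioi x, F y z = Q z * ∫ y in Ioi z, φ y := by
    intro z hz
    have : ∀ y, F y z = (Ici z).indicator (fun y => φ y * Q z) y := by
      intro y; simp [F, indicator_apply]
    simp_rw [this]
    rw [setIntegral_indicator measurableSet_Ici,
      inter_eq_right.mpr (Ici_subset_Ioi.mpr hz), integral_Ici_eq_integral_Ioi,
      integral_mul_const, mul_comm]
  rw [← setIntegral_congr_fun measurableSet_Ioi hleft, integral_integral_swap hF,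
    setIntegral_congr_fun measurableSet_Ioi hright]

theorem integral_mul_tailIntegral_pow (hQ : IntegrableOn Q (Ioi x)) (n : ℕ) :
    ∫ y in Ioi x, Q y * tailIntegral Q y ^ n = tailIntegral Q x ^ (n + 1) / (n + 1) := by
  induction n generalizing x with
  | zero => simp [tailIntegral]
  | succ n ih =>
    set A := tailIntegral Q
    set B := ∫ y in Ioi x, Q y * A y ^ (n + 1)
    have hfubini := integral_mul_integral_Ioc_eq (integrableOn_mul_tailIntegral_pow hQ n) hQ
    have hleft : ∫ y in Ioi x, Q y * A y ^ n * ∫ z in Ioc x y, Q z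
        = A x ^ (n + 1) / (n + 1) * A x - B := by
      have : ∀ y ∈ Ioi x, Q y * A y ^ n * ∫ z in Ioc x y, Q z
          = Q y * A y ^ n * A x - Q y * A y ^ (n + 1) := by
        intro y hy
        have hsplit := tailIntegral_eq_integral_Ioc_add hQ (le_of_lt hy)
        rw [show ∫ z in Ioc x y, Q z = A x - A y by linarith]
        ring
      rw [setIntegral_congr_fun measurableSet_Ioi this,
        integral_sub ((integrableOn_mul_tailIntegral_pow hQ n).mul_const _)
          (integrableOn_mul_tailIntegral_pow hQ (n + 1)), integral_mul_const, ih hQ]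
    have hright : ∫ z in Ioi x, Q z * ∫ y in Ioi z, Q y * A y ^ n = B / (n + 1) := by
      have : ∀ z ∈ Ioi x, Q z * ∫ y in Ioi z, Q y * A y ^ n = Q z * A z ^ (n + 1) / (n + 1) := by
        intro z hz
        rw [ih (hQ.mono_set (Ioi_subset_Ioi (le_of_lt hz))), mul_div_assoc]
      rw [setIntegral_congr_fun measurableSet_Ioi this, integral_div]
    rw [hleft, hright] at hfubini
    rw [eq_div_iff (by positivity)]
    field_simp at hfubini
    push_cast
    linear_combination (-1 : ℝ) * hfubini

lemma tailIntegral_le_of_le (hQ : IntegrableOn Q (Ioi x)) (hQ0 : ∀ y ∈ Ioi x, 0 ≤ Q y) {y : ℝ}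
    (hxy : x ≤ y) : tailIntegral Q y ≤ tailIntegral Q x := by
  rw [tailIntegral_eq_integral_Ioc_add hQ hxy, le_add_iff_nonneg_left]
  exact setIntegral_nonneg measurableSet_Ioc fun z hz => hQ0 z hz.1

end TailIntegral

lemma hasSum_mul_pow_div_factorial (c t : ℝ) :
    HasSum (fun n : ℕ => c * t ^ n / n.factorial) (c * Real.exp t) := by
  simp_rw [mul_div_assoc]
  exact (Real.exp_eq_exp_ℝ ▸ NormedSpace.expSeries_div_hasSum_exp t).mul_left c

def volterraOp (K : ℝ → ℝ → ℂ) (v : ℝ → ℂ) (x : ℝ) : ℂ := ∫ y in Ioi x, K x y * v y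

section Volterra

variable {a : ℝ} {K : ℝ → ℝ → ℂ} {Q : ℝ → ℝ}

lemma measurable_volterraOp (hKm : Measurable fun p : ℝ × ℝ => K p.1 p.2) {v : ℝ → ℂ}
    (hv : Measurable v) : Measurable (volterraOp K v) := by
  have hF : StronglyMeasurable ({p : ℝ × ℝ | p.1 < p.2}.indicator fun p => K p.1 p.2 * v p.2) :=
    ((hKm.mul (hv.comp measurable_snd)).indicator
      (measurableSet_lt measurable_fst measurable_snd)).stronglyMeasurable
  convert (hF.integral_prod_right' (ν := volume)).measurable using 1
  ext x
  rw [volterraOp, ← integral_indicator measurableSet_Ioi]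
  congr 1 with y

lemma nonneg_of_norm_kernel_le (hKQb : ∀ x y : ℝ, a ≤ x → x ≤ y → ‖K x y‖ ≤ Q y) {y : ℝ}
    (hy : a ≤ y) : 0 ≤ Q y :=
  (norm_nonneg _).trans (hKQb a y le_rfl hy)

lemma norm_kernel_mul_le (hKQb : ∀ x y : ℝ, a ≤ x → x ≤ y → ‖K x y‖ ≤ Q y) {v : ℝ → ℂ}
    {C : ℝ} {n : ℕ} (hv : ∀ y, a ≤ y → ‖v y‖ ≤ C * tailIntegral Q y ^ n / n.factorial)
    {x y : ℝ} (hx : a ≤ x) (hxy : x ≤ y) :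
    ‖K x y * v y‖ ≤ C / n.factorial * (Q y * tailIntegral Q y ^ n) := by
  have hy : a ≤ y := hx.trans hxy
  rw [norm_mul]
  calc ‖K x y‖ * ‖v y‖ ≤ Q y * (C * tailIntegral Q y ^ n / n.factorial) :=
        mul_le_mul (hKQb x y hx hxy) (hv y hy) (norm_nonneg _) (nonneg_of_norm_kernel_le hKQb hy)
    _ = C / n.factorial * (Q y * tailIntegral Q y ^ n) := by ring

lemma integrableOn_kernel_mul (hKm : Measurable fun p : ℝ × ℝ => K p.1 p.2)
    (hKQb : ∀ x y : ℝ, a ≤ x → x ≤ y → ‖K x y‖ ≤ Q y) (hQ : IntegrableOn Q (Ici a))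
    {v : ℝ → ℂ} (hvm : Measurable v) {C : ℝ} {n : ℕ}
    (hv : ∀ y, a ≤ y → ‖v y‖ ≤ C * tailIntegral Q y ^ n / n.factorial) {x : ℝ} (hx : a ≤ x) :
    IntegrableOn (fun y => K x y * v y) (Ioi x) := by
  have hQx : IntegrableOn Q (Ioi x) := hQ.mono_set (Ioi_subset_Ici hx)
  refine Integrable.mono' ((integrableOn_mul_tailIntegral_pow hQx n).const_mul (C / n.factorial))
    ((hKm.comp (measurable_const.prodMk measurable_id)).mul hvm).aestronglyMeasurable ?_
  filter_upwards [ae_restrict_mem measurableSet_Ioi] with y hy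
  exact norm_kernel_mul_le hKQb hv hx (le_of_lt hy)

lemma integral_norm_kernel_mul_le (hKQb : ∀ x y : ℝ, a ≤ x → x ≤ y → ‖K x y‖ ≤ Q y)
    (hQ : IntegrableOn Q (Ici a)) {v : ℝ → ℂ} {C : ℝ} {n : ℕ}
    (hv : ∀ y, a ≤ y → ‖v y‖ ≤ C * tailIntegral Q y ^ n / n.factorial) {x : ℝ} (hx : a ≤ x) :
    ∫ y in Ioi x, ‖K x y * v y‖ ≤ C * tailIntegral Q x ^ (n + 1) / (n + 1).factorial := by
  have hQx : IntegrableOn Q (Ioi x) := hQ.mono_set (Ioi_subset_Ici hx)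
  calc ∫ y in Ioi x, ‖K x y * v y‖
      ≤ ∫ y in Ioi x, C / n.factorial * (Q y * tailIntegral Q y ^ n) := by
        refine integral_mono_of_nonneg (Eventually.of_forall fun _ => norm_nonneg _)
          ((integrableOn_mul_tailIntegral_pow hQx n).const_mul _) ?_
        filter_upwards [ae_restrict_mem measurableSet_Ioi] with y hy
        exact norm_kernel_mul_le hKQb hv hx (le_of_lt hy)
    _ = C * tailIntegral Q x ^ (n + 1) / (n + 1).factorial := by
        rw [integral_const_mul, integral_mul_tailIntegral_pow hQx, Nat.factorial_succ]
        push_cast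
        field_simp

lemma norm_volterraOp_le (hKQb : ∀ x y : ℝ, a ≤ x → x ≤ y → ‖K x y‖ ≤ Q y)
    (hQ : IntegrableOn Q (Ici a)) {v : ℝ → ℂ} {C : ℝ} {n : ℕ}
    (hv : ∀ y, a ≤ y → ‖v y‖ ≤ C * tailIntegral Q y ^ n / n.factorial) {x : ℝ} (hx : a ≤ x) :
    ‖volterraOp K v x‖ ≤ C * tailIntegral Q x ^ (n + 1) / (n + 1).factorial :=
  (norm_integral_le_integral_norm _).trans (integral_norm_kernel_mul_le hKQb hQ hv hx)

lemma volterraOp_sub (hKm : Measurable fun p : ℝ × ℝ => K p.1 p.2)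
    (hKQb : ∀ x y : ℝ, a ≤ x → x ≤ y → ‖K x y‖ ≤ Q y) (hQ : IntegrableOn Q (Ici a))
    {v w : ℝ → ℂ} (hvm : Measurable v) (hwm : Measurable w) {C D : ℝ}
    (hv : ∀ y, a ≤ y → ‖v y‖ ≤ C) (hw : ∀ y, a ≤ y → ‖w y‖ ≤ D) {x : ℝ} (hx : a ≤ x) :
    volterraOp K (v - w) x = volterraOp K v x - volterraOp K w x := by
  have hint : ∀ {u : ℝ → ℂ} {M : ℝ}, Measurable u → (∀ y, a ≤ y → ‖u y‖ ≤ M) →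
      IntegrableOn (fun y => K x y * u y) (Ioi x) := fun hum hu =>
    integrableOn_kernel_mul hKm hKQb hQ hum (n := 0) (by simpa using hu) hx
  simp_rw [volterraOp, Pi.sub_apply, mul_sub]
  exact integral_sub (hint hvm hv) (hint hwm hw)

theorem eq_zero_of_eq_volterraOp (hKQb : ∀ x y : ℝ, a ≤ x → x ≤ y → ‖K x y‖ ≤ Q y)
    (hQ : IntegrableOn Q (Ici a)) {d : ℝ → ℂ} {C : ℝ} (hdC : ∀ x, a ≤ x → ‖d x‖ ≤ C)
    (hd : ∀ x, a ≤ x → d x = volterraOp K d x) {x : ℝ} (hx : a ≤ x) : d x = 0 := by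
  have hbound : ∀ n : ℕ, ∀ x, a ≤ x → ‖d x‖ ≤ C * tailIntegral Q x ^ n / n.factorial := by
    intro n
    induction n with
    | zero => simpa using hdC
    | succ n ih => exact fun x hx => hd x hx ▸ norm_volterraOp_le hKQb hQ ih hx
  have hlim : Tendsto (fun n : ℕ => C * tailIntegral Q x ^ n / n.factorial) atTop (𝓝 0) := by
    simpa [mul_div_assoc] using (FloorSemiring.tendsto_pow_div_factorial_atTop _).const_mul C
  exact norm_le_zero_iff.mp <| ge_of_tendsto' hlim fun n => hbound n x hx

end Volterra

def picardIterate (g : ℝ → ℂ) (K : ℝ → ℝ → ℂ) : ℕ → ℝ → ℂ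
  | 0 => g
  | n + 1 => volterraOp K (picardIterate g K n)

def picardSum (g : ℝ → ℂ) (K : ℝ → ℝ → ℂ) (x : ℝ) : ℂ := ∑' n, picardIterate g K n x

section Picard

variable {a M : ℝ} {g : ℝ → ℂ} {K : ℝ → ℝ → ℂ} {Q : ℝ → ℝ}

lemma measurable_picardIterate (hgm : Measurable g)
    (hKm : Measurable fun p : ℝ × ℝ => K p.1 p.2) : ∀ n, Measurable (picardIterate g K n)
  | 0 => hgm
  | n + 1 => measurable_volterraOp hKm (measurable_picardIterate hgm hKm n)

lemma measurable_picardSum (hgm : Measurable g) (hKm : Measurable fun p : ℝ × ℝ => K p.1 p.2) :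
    Measurable (picardSum g K) :=
  Measurable.tsum (measurable_picardIterate hgm hKm)

lemma norm_picardIterate_le (hKQb : ∀ x y : ℝ, a ≤ x → x ≤ y → ‖K x y‖ ≤ Q y)
    (hQ : IntegrableOn Q (Ici a)) (hg : ∀ x, a ≤ x → ‖g x‖ ≤ M) :
    ∀ n, ∀ x, a ≤ x → ‖picardIterate g K n x‖ ≤ M * tailIntegral Q x ^ n / n.factorial
  | 0 => by simpa [picardIterate] using hg
  | n + 1 => fun _ hx => norm_volterraOp_le hKQb hQ (norm_picardIterate_le hKQb hQ hg n) hx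

lemma summable_picardIterate (hKQb : ∀ x y : ℝ, a ≤ x → x ≤ y → ‖K x y‖ ≤ Q y)
    (hQ : IntegrableOn Q (Ici a)) (hg : ∀ x, a ≤ x → ‖g x‖ ≤ M) {x : ℝ} (hx : a ≤ x) :
    Summable fun n => picardIterate g K n x :=
  .of_norm_bounded (hasSum_mul_pow_div_factorial M _).summable
    fun n => norm_picardIterate_le hKQb hQ hg n x hx

lemma norm_picardSum_le (hKQb : ∀ x y : ℝ, a ≤ x → x ≤ y → ‖K x y‖ ≤ Q y)
    (hQ : IntegrableOn Q (Ici a)) (hg : ∀ x, a ≤ x → ‖g x‖ ≤ M) {x : ℝ} (hx : a ≤ x) :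
    ‖picardSum g K x‖ ≤ M * Real.exp (tailIntegral Q x) :=
  (summable_picardIterate hKQb hQ hg hx).hasSum.norm_le_of_bounded
    (hasSum_mul_pow_div_factorial M _) fun n => norm_picardIterate_le hKQb hQ hg n x hx

theorem picardSum_eq_add_volterraOp (hgm : Measurable g)
    (hKm : Measurable fun p : ℝ × ℝ => K p.1 p.2)
    (hKQb : ∀ x y : ℝ, a ≤ x → x ≤ y → ‖K x y‖ ≤ Q y) (hQ : IntegrableOn Q (Ici a))
    (hg : ∀ x, a ≤ x → ‖g x‖ ≤ M) {x : ℝ} (hx : a ≤ x) :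
    picardSum g K x = g x + volterraOp K (picardSum g K) x := by
  have hbound := norm_picardIterate_le (K := K) hKQb hQ hg
  have hint : ∀ n, IntegrableOn (fun y => K x y * picardIterate g K n y) (Ioi x) := fun n =>
    integrableOn_kernel_mul hKm hKQb hQ (measurable_picardIterate hgm hKm n) (hbound n) hx
  have hnorm : Summable fun n => ∫ y in Ioi x, ‖K x y * picardIterate g K n y‖ := by
    refine .of_nonneg_of_le (fun _ => integral_nonneg fun _ => norm_nonneg _)
      (fun n => integral_norm_kernel_mul_le hKQb hQ (hbound n) hx) ?_
    exact (summable_nat_add_iff (f := fun n => M * tailIntegral Q x ^ n / n.factorial) 1).mpr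
      (hasSum_mul_pow_div_factorial M _).summable
  have htail : HasSum (fun n => picardIterate g K (n + 1) x) (volterraOp K (picardSum g K) x) := by
    have := hasSum_integral_of_summable_integral_norm hint hnorm
    simp_rw [tsum_mul_left] at this
    exact this
  have := (hasSum_nat_add_iff (f := fun n => picardIterate g K n x) 1).mp htail
  rw [picardSum, (summable_picardIterate hKQb hQ hg hx).hasSum.unique this,
    Finset.sum_range_one, add_comm]
  rfl

end Picard

/-- Volterra integral equation lemma: if `g` is bounded and measurable on `[a,∞)` and the
kernel `K` satisfies `|K(x,y)| ≤ Q(y)` on `{a ≤ x ≤ y}` with `Q ∈ L¹([a,∞))`, then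
`f(x) = g(x) + ∫_x^∞ K(x,y) f(y) dy` has a unique bounded measurable solution `f` on
`[a,∞)`, and `|f(x)| ≤ ‖g‖_∞ exp(∫_x^∞ Q(y) dy)`. -/
theorem volterra_integral_equation
    (a : ℝ) (g : ℝ → ℂ) (K : ℝ → ℝ → ℂ) (Q : ℝ → ℝ)
    (hgm : Measurable g) (hgb : ∃ M : ℝ, ∀ x : ℝ, a ≤ x → ‖g x‖ ≤ M)
    (hKm : Measurable (fun p : ℝ × ℝ => K p.1 p.2))
    (hKQb : ∀ x y : ℝ, a ≤ x → x ≤ y → ‖K x y‖ ≤ Q y)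
    (hQ : IntegrableOn Q (Set.Ici a)) :
    ∃ f : ℝ → ℂ,
      Measurable f ∧ (∃ M : ℝ, ∀ x : ℝ, a ≤ x → ‖f x‖ ≤ M) ∧
      (∀ x : ℝ, a ≤ x → f x = g x + ∫ y in Set.Ioi x, K x y * f y) ∧
      (∀ x : ℝ, a ≤ x →
        ‖f x‖ ≤ (⨆ t : Set.Ici a, ‖g (t : ℝ)‖) * Real.exp (∫ y in Set.Ioi x, Q y)) ∧
      (∀ h : ℝ → ℂ, Measurable h → (∃ M : ℝ, ∀ x : ℝ, a ≤ x → ‖h x‖ ≤ M) →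
        (∀ x : ℝ, a ≤ x → h x = g x + ∫ y in Set.Ioi x, K x y * h y) →
        ∀ x : ℝ, a ≤ x → h x = f x) := by
  obtain ⟨M₀, hM₀⟩ := hgb
  set M := ⨆ t : Ici a, ‖g t‖
  have hgM : ∀ x, a ≤ x → ‖g x‖ ≤ M := fun x hx =>
    le_ciSup (f := fun t : Ici a => ‖g t‖) ⟨M₀, by rintro _ ⟨t, rfl⟩; exact hM₀ t t.2⟩ ⟨x, hx⟩
  have hQx : IntegrableOn Q (Ioi a) := hQ.mono_set Ioi_subset_Ici_self
  have hQ0 : ∀ y ∈ Ioi a, 0 ≤ Q y := fun y hy => nonneg_of_norm_kernel_le hKQb hy.le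
  have hM : 0 ≤ M := (norm_nonneg _).trans (hgM a le_rfl)
  have hfM : ∀ x, a ≤ x → ‖picardSum g K x‖ ≤ M * Real.exp (tailIntegral Q a) := fun x hx =>
    (norm_picardSum_le hKQb hQ hgM hx).trans <|
      mul_le_mul_of_nonneg_left (Real.exp_le_exp.mpr (tailIntegral_le_of_le hQx hQ0 hx)) hM
  refine ⟨picardSum g K, measurable_picardSum hgm hKm, ⟨_, hfM⟩,
    fun x hx => picardSum_eq_add_volterraOp hgm hKm hKQb hQ hgM hx,
    fun x hx => norm_picardSum_le hKQb hQ hgM hx, ?_⟩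
  rintro h hhm ⟨Mh, hMh⟩ hh x hx
  refine sub_eq_zero.mp <| eq_zero_of_eq_volterraOp (d := h - picardSum g K) hKQb hQ
    (fun y hy => (norm_sub_le _ _).trans (add_le_add (hMh y hy) (hfM y hy))) (fun y hy => ?_) hx
  rw [volterraOp_sub hKm hKQb hQ hhm (measurable_picardSum hgm hKm) hMh hfM hy, Pi.sub_apply,
    hh y hy, picardSum_eq_add_volterraOp hgm hKm hKQb hQ hgM hy]
  simp only [volterraOp]
  ring
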